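/- arXiv:2402.11967 — 3 statements merged into one kernel-verified Lean document; each statement's English description precedes it below -/
import Mathlib

section
/- The exponent −1/4 in the upper bound for I^R_{α,β}(σ) is optimal in the following scale-invariant sense: there exist constants c₀ > 0 and σ₀ > 0 such that for every α > 0, every R ≥ (√3/√2) α and every σ ≥ σ₀ α², one has sup_{β ∈ [0,∞)} I^R_{α,β}(σ) ≥ c₀ σ^{−1/4} α^{3/2}, where I^R_{α,β}(σ) = ∫₀^{√(R²−α²)} dx / (1 + σ (f_α(x) − β)²). -/
/-- The phase derivative `f_α(x) = α x / (α² + x²)^{3/2}`. -/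
noncomputable def fPhase (α x : ℝ) : ℝ := α * x / (α ^ 2 + x ^ 2) ^ (3 / 2 : ℝ)

/-- The integral `I^R_{α,β}(σ) = ∫₀^{√(R²−α²)} dx / (1 + σ (f_α(x) − β)²)`. -/
noncomputable def Iint (α β R σ : ℝ) : ℝ :=
  ∫ x in (0 : ℝ)..(Real.sqrt (R ^ 2 - α ^ 2)), 1 / (1 + σ * (fPhase α x - β) ^ 2)

/-!
Take `β = f_α(x₀)` at the critical point `x₀ = α / √2` of `f_α`, whose derivative is
`α (α² - 2x²) / (α² + x²)^{5/2}`. Since `|f_α'(y)| ≤ |α² - 2y²| / α⁴` vanishes linearly at `x₀`,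
on `[x₀ - δ, x₀]` the phase stays within `2√2 δ² / α³` of `β`, so the integrand is at least `1/2`
there as soon as `8 σ δ⁴ ≤ α⁶`. The width `δ = α^{3/2} σ^{-1/4} / 2` gives `I ≥ δ / 2`; `σ ≥ α²`
keeps the window inside `[0, x₀]`, and `R² ≥ 3α²/2` puts `x₀` below `√(R² - α²)`.
-/

open Real Set intervalIntegral

lemma fPhase_nonneg {α x : ℝ} (hα : 0 ≤ α) (hx : 0 ≤ x) : 0 ≤ fPhase α x := by
  unfold fPhase
  positivity

lemma hasDerivAt_fPhase {α : ℝ} (hα : α ≠ 0) (x : ℝ) :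
    HasDerivAt (fPhase α) (α * (α ^ 2 - 2 * x ^ 2) / (α ^ 2 + x ^ 2) ^ (5 / 2 : ℝ)) x := by
  have hu : 0 < α ^ 2 + x ^ 2 := by positivity
  have hden : HasDerivAt (fun y : ℝ => (α ^ 2 + y ^ 2) ^ (3 / 2 : ℝ))
      (2 * x * (3 / 2) * (α ^ 2 + x ^ 2) ^ ((3 / 2 : ℝ) - 1)) x := by
    simpa using
      ((hasDerivAt_pow 2 x).const_add (α ^ 2)).rpow_const (p := 3 / 2) (Or.inr (by norm_num))
  have hnum : HasDerivAt (fun y : ℝ => α * y) α x := by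
    simpa using (hasDerivAt_id x).const_mul α
  refine (hnum.div hden (by positivity)).congr_deriv ?_
  rw [show (3 / 2 : ℝ) - 1 = 1 / 2 by norm_num, show (3 / 2 : ℝ) = 1 + 1 / 2 by norm_num,
    show (5 / 2 : ℝ) = 2 + 1 / 2 by norm_num, rpow_add hu, rpow_add hu, rpow_one, rpow_two]
  have hw : 0 < (α ^ 2 + x ^ 2) ^ (1 / 2 : ℝ) := by positivity
  field_simp
  ring

lemma continuous_fPhase {α : ℝ} (hα : α ≠ 0) : Continuous (fPhase α) :=
  continuous_iff_continuousAt.2 fun x => (hasDerivAt_fPhase hα x).continuousAt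

lemma abs_deriv_fPhase_le {α : ℝ} (hα : 0 < α) (x : ℝ) :
    |α * (α ^ 2 - 2 * x ^ 2) / (α ^ 2 + x ^ 2) ^ (5 / 2 : ℝ)| ≤ |α ^ 2 - 2 * x ^ 2| / α ^ 4 := by
  have hα5 : α ^ 5 ≤ (α ^ 2 + x ^ 2) ^ (5 / 2 : ℝ) := by
    calc α ^ 5 = (α ^ 2) ^ (5 / 2 : ℝ) := by
          rw [← rpow_natCast α 2, ← rpow_mul hα.le]; norm_num
      _ ≤ (α ^ 2 + x ^ 2) ^ (5 / 2 : ℝ) :=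
          rpow_le_rpow (by positivity) (by nlinarith) (by norm_num)
  rw [abs_div, abs_mul, abs_of_pos hα,
    abs_of_pos (show 0 < (α ^ 2 + x ^ 2) ^ (5 / 2 : ℝ) by positivity)]
  calc α * |α ^ 2 - 2 * x ^ 2| / (α ^ 2 + x ^ 2) ^ (5 / 2 : ℝ)
      ≤ α * |α ^ 2 - 2 * x ^ 2| / α ^ 5 := by gcongr
    _ = |α ^ 2 - 2 * x ^ 2| / α ^ 4 := by field_simp

lemma abs_fPhase_sub_fPhase_critical_le {α δ x : ℝ} (hα : 0 < α) (hδ : δ ≤ α / √2)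
    (hx : x ∈ Icc (α / √2 - δ) (α / √2)) :
    |fPhase α x - fPhase α (α / √2)| ≤ 2 * √2 * δ ^ 2 / α ^ 3 := by
  set x₀ := α / √2
  have hx₀ : 2 * x₀ ^ 2 = α ^ 2 := by rw [div_pow, sq_sqrt zero_le_two]; field_simp
  have hδ0 : 0 ≤ δ := by linarith [hx.1, hx.2]
  have hderiv : ∀ y ∈ Icc (x₀ - δ) x₀,
      ‖α * (α ^ 2 - 2 * y ^ 2) / (α ^ 2 + y ^ 2) ^ (5 / 2 : ℝ)‖ ≤ 4 * x₀ * δ / α ^ 4 := by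
    rintro y ⟨hy₁, hy₂⟩
    refine (abs_deriv_fPhase_le hα y).trans (div_le_div_of_nonneg_right ?_ (by positivity))
    rw [abs_of_nonneg (by nlinarith)]
    nlinarith
  have hmvt := (convex_Icc (x₀ - δ) x₀).norm_image_sub_le_of_norm_hasDerivWithin_le
    (fun y _ => (hasDerivAt_fPhase hα.ne' y).hasDerivWithinAt) hderiv
    ⟨by linarith, le_rfl⟩ hx
  have hdist : |x - x₀| ≤ δ := abs_le.2 ⟨by linarith [hx.1], by linarith [hx.2]⟩
  calc |fPhase α x - fPhase α x₀| ≤ 4 * x₀ * δ / α ^ 4 * |x - x₀| := hmvt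
    _ ≤ 4 * x₀ * δ / α ^ 4 * δ := by gcongr
    _ = 2 * √2 * δ ^ 2 / α ^ 3 := by
      simp only [x₀]
      field_simp
      rw [sq_sqrt zero_le_two]
      ring

lemma intervalIntegrable_integrand {α : ℝ} (hα : α ≠ 0) (β : ℝ) {σ : ℝ} (hσ : 0 ≤ σ) (a b : ℝ) :
    IntervalIntegrable (fun x => 1 / (1 + σ * (fPhase α x - β) ^ 2)) MeasureTheory.volume a b := by
  have := continuous_fPhase hα
  exact (continuous_const.div (by fun_prop) fun x => by positivity).intervalIntegrable a b

lemma Iint_le_sqrt (α β R : ℝ) {σ : ℝ} (hσ : 0 ≤ σ) : Iint α β R σ ≤ √(R ^ 2 - α ^ 2) := by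
  have hbound (x : ℝ) : ‖1 / (1 + σ * (fPhase α x - β) ^ 2)‖ ≤ 1 := by
    rw [norm_div, norm_one, Real.norm_of_nonneg (by positivity)]
    exact div_le_one_of_le₀ (by nlinarith [sq_nonneg (fPhase α x - β)]) (by positivity)
  calc Iint α β R σ ≤ ‖Iint α β R σ‖ := le_norm_self _
    _ ≤ 1 * |√(R ^ 2 - α ^ 2) - 0| := norm_integral_le_of_norm_le_const fun x _ => hbound x
    _ = √(R ^ 2 - α ^ 2) := by rw [one_mul, sub_zero, abs_of_nonneg (sqrt_nonneg _)]

lemma le_Iint_fPhase_critical {α δ R σ : ℝ} (hα : 0 < α) (hσ : 0 ≤ σ) (hδ₀ : 0 ≤ δ)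
    (hδ : δ ≤ α / √2) (hσδ : 8 * σ * δ ^ 4 ≤ α ^ 6) (hR : α / √2 ≤ √(R ^ 2 - α ^ 2)) :
    δ / 2 ≤ Iint α (fPhase α (α / √2)) R σ := by
  set x₀ := α / √2
  set g := fun x => 1 / (1 + σ * (fPhase α x - fPhase α x₀) ^ 2)
  have hg : ∀ x ∈ Icc (x₀ - δ) x₀, 1 / 2 ≤ g x := by
    intro x hx
    have hflat := abs_fPhase_sub_fPhase_critical_le hα hδ hx
    have hsq : σ * (fPhase α x - fPhase α x₀) ^ 2 ≤ 1 := by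
      calc σ * (fPhase α x - fPhase α x₀) ^ 2 = σ * |fPhase α x - fPhase α x₀| ^ 2 := by
            rw [sq_abs]
        _ ≤ σ * (2 * √2 * δ ^ 2 / α ^ 3) ^ 2 := by gcongr
        _ = 8 * σ * δ ^ 4 / α ^ 6 := by
            field_simp
            rw [sq_sqrt zero_le_two]
            ring
        _ ≤ 1 := div_le_one_of_le₀ hσδ (by positivity)
    exact one_div_le_one_div_of_le (by positivity) (by linarith)
  calc δ / 2 = ∫ _ in (x₀ - δ)..x₀, (1 / 2 : ℝ) := by
        rw [integral_const, smul_eq_mul]; ring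
    _ ≤ ∫ x in (x₀ - δ)..x₀, g x :=
      integral_mono_on (by linarith) intervalIntegrable_const
        (intervalIntegrable_integrand hα.ne' _ hσ _ _) hg
    _ ≤ ∫ x in (0 : ℝ)..√(R ^ 2 - α ^ 2), g x :=
      integral_mono_interval (by linarith) (by linarith) hR
        (Filter.Eventually.of_forall fun x => by positivity)
        (intervalIntegrable_integrand hα.ne' _ hσ _ _)

lemma div_sqrt_two_le_sqrt_sq_sub_sq {α R : ℝ} (hα : 0 ≤ α) (hR : √3 / √2 * α ≤ R) :
    α / √2 ≤ √(R ^ 2 - α ^ 2) := by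
  have h : (√3 / √2 * α) ^ 2 ≤ R ^ 2 := pow_le_pow_left₀ (by positivity) hR 2
  rw [mul_pow, div_pow, sq_sqrt zero_le_three, sq_sqrt zero_le_two] at h
  rw [le_sqrt (by positivity) (by nlinarith), div_pow, sq_sqrt zero_le_two]
  linarith

/-- Optimality of the exponent `−1/4`: there exist `c₀, σ₀ > 0` such that for every `α > 0`,
`R ≥ (√3/√2) α` and `σ ≥ σ₀ α²`, one has `sup_{β ≥ 0} I^R_{α,β}(σ) ≥ c₀ σ^{−1/4} α^{3/2}`. -/
theorem statement6 :
    ∃ c₀ > (0 : ℝ), ∃ σ₀ > (0 : ℝ), ∀ α R σ : ℝ, 0 < α →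
      Real.sqrt 3 / Real.sqrt 2 * α ≤ R → σ₀ * α ^ 2 ≤ σ →
      c₀ * σ ^ (-(1 / 4) : ℝ) * α ^ (3 / 2 : ℝ) ≤ ⨆ β : {b : ℝ // 0 ≤ b}, Iint α β.1 R σ := by
  refine ⟨1 / 4, by norm_num, 1, one_pos, fun α R σ hα hR hσ => ?_⟩
  have hσ₀ : 0 < σ := by nlinarith
  set δ := α ^ (3 / 2 : ℝ) * σ ^ (-(1 / 4) : ℝ) / 2
  have hδ₀ : 0 ≤ δ := by positivity
  have hδ4 : 16 * σ * δ ^ 4 = α ^ 6 := by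
    have hα6 : (α ^ (3 / 2 : ℝ)) ^ 4 = α ^ 6 := by
      rw [← rpow_natCast, ← rpow_mul hα.le]; norm_num
    have hσ4 : (σ ^ (-(1 / 4) : ℝ)) ^ 4 = σ⁻¹ := by
      rw [← rpow_natCast, ← rpow_mul hσ₀.le]; norm_num [rpow_neg_one]
    simp only [δ, div_pow, mul_pow, hα6, hσ4]
    field_simp
    norm_num
  have hδ : δ ≤ α / √2 := by
    have hδα : δ ^ 4 ≤ (α / 2) ^ 4 := by
      refine le_of_mul_le_mul_left ?_ (by positivity : 0 < 16 * α ^ 2)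
      nlinarith [pow_nonneg hδ₀ 4]
    calc δ ≤ α / 2 := (pow_le_pow_iff_left₀ hδ₀ (by positivity) four_ne_zero).1 hδα
      _ ≤ α / √2 := div_le_div_of_nonneg_left hα.le (by positivity)
          (by nlinarith [sq_sqrt zero_le_two, sqrt_nonneg 2])
  have hbdd : BddAbove (range fun β : {b : ℝ // 0 ≤ b} => Iint α β.1 R σ) :=
    ⟨_, forall_mem_range.2 fun β => Iint_le_sqrt α β.1 R hσ₀.le⟩
  calc 1 / 4 * σ ^ (-(1 / 4) : ℝ) * α ^ (3 / 2 : ℝ) = δ / 2 := by ring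
    _ ≤ Iint α (fPhase α (α / √2)) R σ :=
      le_Iint_fPhase_critical hα hσ₀.le hδ₀ hδ (by nlinarith [pow_nonneg hδ₀ 4])
        (div_sqrt_two_le_sqrt_sq_sub_sq hα.le hR)
    _ ≤ _ := le_ciSup hbdd ⟨_, fPhase_nonneg hα.le (by positivity)⟩
end

section
/- Let ν > 0, set ν' = ν, let ε > 0 and let ξ ∈ ℝ³ with ξ_h ≠ 0. Then the matrix 𝔹(ξ,ε) is diagonalizable over ℂ and its eigenvalues, counted with multiplicity, are exactly 0, −ν|ξ|², −ν|ξ|² + i|ξ_h|/(ε|ξ|) and −ν|ξ|² − i|ξ_h|/(ε|ξ|). -/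
open Matrix

/-- The symbol `𝔹(ξ,ε)` of the linearized strongly stratified Boussinesq system. -/
noncomputable def Bmat (ν ν' ε ξ₁ ξ₂ ξ₃ : ℝ) : Matrix (Fin 4) (Fin 4) ℝ :=
  !![-ν * (ξ₂ ^ 2 + ξ₃ ^ 2), ν * ξ₁ * ξ₂, ν * ξ₁ * ξ₃,
      ξ₁ * ξ₃ / (ε * (ξ₁ ^ 2 + ξ₂ ^ 2 + ξ₃ ^ 2));
     ν * ξ₁ * ξ₂, -ν * (ξ₁ ^ 2 + ξ₃ ^ 2), ν * ξ₂ * ξ₃,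
      ξ₂ * ξ₃ / (ε * (ξ₁ ^ 2 + ξ₂ ^ 2 + ξ₃ ^ 2));
     ν * ξ₁ * ξ₃, ν * ξ₂ * ξ₃, -ν * (ξ₁ ^ 2 + ξ₂ ^ 2),
      -(ξ₁ ^ 2 + ξ₂ ^ 2) / (ε * (ξ₁ ^ 2 + ξ₂ ^ 2 + ξ₃ ^ 2));
     0, 0, 1 / ε, -ν' * (ξ₁ ^ 2 + ξ₂ ^ 2 + ξ₃ ^ 2)]

/-!
Write `s = |ξ|²`. On `(u, θ)`, `𝔹` acts by `u ↦ ν (ξ·u) ξ - ν s u + θ (ξ₃ ξ - s e₃) / (ε s)` and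
`θ ↦ u₃ / ε - ν s θ`. The horizontal field `(-ξ₂, ξ₁, 0, 0)` is an eigenvector for `-ν s`. Since
`ξ₃ ξ - s e₃ ⊥ ξ`, the vector `(ξ₃ ξ - s e₃, c ε s)` is an eigenvector for `-ν s + c` as soon as
`c² ε² s = -|ξ_h|²`, i.e. `c = ± i |ξ_h| / (ε |ξ|)`; solving `𝔹 (α ξ + β (ξ₃ ξ - s e₃), θ) = 0` gives
the fourth eigenvector, for `0`. When `ν > 0` and `ξ_h ≠ 0` the four eigenvalues are distinct, so the
eigenvectors form a basis, and `det (μ - 𝔹)` is the characteristic polynomial of the diagonal matrix.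
-/

namespace Matrix

variable {K n : Type*} [Field K] [Fintype n] [DecidableEq n]

theorem isUnit_transpose_of_mulVec_eq_smul {A : Matrix n n K} {d : n → K}
    (hd : Function.Injective d) {v : n → n → K} (hv₀ : ∀ j, v j ≠ 0)
    (hv : ∀ j, A *ᵥ v j = d j • v j) : IsUnit (of v)ᵀ := by
  rw [← linearIndependent_cols_iff_isUnit]
  exact Module.End.eigenvectors_linearIndependent' (toLin' A) d hd v fun j =>
    ⟨Module.End.mem_eigenspace_iff.2 (by simpa using hv j), hv₀ j⟩

theorem eq_mul_diagonal_mul_inv_of_mulVec_eq_smul {A : Matrix n n K} {d : n → K}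
    {v : n → n → K} (hP : IsUnit (of v)ᵀ) (hv : ∀ j, A *ᵥ v j = d j • v j) :
    A = (of v)ᵀ * diagonal d * (of v)ᵀ⁻¹ := by
  have hAP : A * (of v)ᵀ = (of v)ᵀ * diagonal d := by
    ext i j
    rw [mul_diagonal]
    simpa [mulVec, dotProduct, mul_apply, mul_comm] using congrFun (hv j) i
  rw [← hAP, Matrix.mul_assoc, mul_nonsing_inv _ ((isUnit_iff_isUnit_det _).1 hP),
    Matrix.mul_one]

theorem det_smul_one_sub_conj_diagonal {P : Matrix n n K} (hP : IsUnit P) (d : n → K) (μ : K) :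
    det (μ • 1 - P * diagonal d * P⁻¹) = ∏ i, (μ - d i) := by
  have hPP : P * P⁻¹ = 1 := mul_nonsing_inv _ ((isUnit_iff_isUnit_det _).1 hP)
  have hconj : μ • 1 - P * diagonal d * P⁻¹ = P * diagonal (fun i => μ - d i) * P⁻¹ := by
    rw [← diagonal_sub, ← smul_one_eq_diagonal, Matrix.mul_sub, Matrix.sub_mul, Matrix.mul_smul,
      Matrix.mul_one, Matrix.smul_mul, hPP]
  rw [hconj, det_conj hP, det_diagonal]

end Matrix

theorem Complex.injective_vec_zero_ofReal_add_sub_I_mul {a ω : ℝ} (ha : a ≠ 0) (hω : ω ≠ 0) :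
    Function.Injective ![0, (a : ℂ), a + I * ω, a - I * ω] := by
  intro i j h
  fin_cases i <;> fin_cases j <;> simp [Complex.ext_iff, ha, hω] at h ⊢ <;> grind

namespace Bmat

noncomputable def kernelVec (ν ε ξ₁ ξ₂ ξ₃ : ℝ) : Fin 4 → ℂ :=
  ![ξ₁ * (1 + ν ^ 2 * ε ^ 2 * (ξ₁ ^ 2 + ξ₂ ^ 2 + ξ₃ ^ 2) ^ 2),
    ξ₂ * (1 + ν ^ 2 * ε ^ 2 * (ξ₁ ^ 2 + ξ₂ ^ 2 + ξ₃ ^ 2) ^ 2),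
    ξ₃ * ν ^ 2 * ε ^ 2 * (ξ₁ ^ 2 + ξ₂ ^ 2 + ξ₃ ^ 2) ^ 2,
    ξ₃ * ν * ε * (ξ₁ ^ 2 + ξ₂ ^ 2 + ξ₃ ^ 2)]

noncomputable def horizontalVec (ξ₁ ξ₂ : ℝ) : Fin 4 → ℂ := ![-ξ₂, ξ₁, 0, 0]

noncomputable def waveVec (ε ξ₁ ξ₂ ξ₃ : ℝ) (c : ℂ) : Fin 4 → ℂ :=
  ![ξ₁ * ξ₃, ξ₂ * ξ₃, -(ξ₁ ^ 2 + ξ₂ ^ 2), c * ε * (ξ₁ ^ 2 + ξ₂ ^ 2 + ξ₃ ^ 2)]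

variable (ν ν' ε ξ₁ ξ₂ ξ₃ : ℝ)

theorem mulVec_kernelVec (hε : ε ≠ 0) (hξ : ξ₁ ^ 2 + ξ₂ ^ 2 + ξ₃ ^ 2 ≠ 0) :
    (Bmat ν ν ε ξ₁ ξ₂ ξ₃).map (algebraMap ℝ ℂ) *ᵥ kernelVec ν ε ξ₁ ξ₂ ξ₃ = 0 := by
  have hε' : (ε : ℂ) ≠ 0 := by exact_mod_cast hε
  have hξ' : (ξ₁ : ℂ) ^ 2 + ξ₂ ^ 2 + ξ₃ ^ 2 ≠ 0 := by exact_mod_cast hξ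
  ext i
  fin_cases i <;> simp [Bmat, kernelVec, mulVec, dotProduct, Fin.sum_univ_four] <;>
    field_simp <;> ring

theorem mulVec_horizontalVec :
    (Bmat ν ν' ε ξ₁ ξ₂ ξ₃).map (algebraMap ℝ ℂ) *ᵥ horizontalVec ξ₁ ξ₂
      = ((-(ν * (ξ₁ ^ 2 + ξ₂ ^ 2 + ξ₃ ^ 2)) : ℝ) : ℂ) • horizontalVec ξ₁ ξ₂ := by
  ext i
  fin_cases i <;> simp [Bmat, horizontalVec, mulVec, dotProduct, Fin.sum_univ_four] <;> ring

theorem mulVec_waveVec (hε : ε ≠ 0) (hξ : ξ₁ ^ 2 + ξ₂ ^ 2 + ξ₃ ^ 2 ≠ 0) (c : ℂ)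
    (hc : c ^ 2 * ε ^ 2 * (ξ₁ ^ 2 + ξ₂ ^ 2 + ξ₃ ^ 2) = -(ξ₁ ^ 2 + ξ₂ ^ 2)) :
    (Bmat ν ν ε ξ₁ ξ₂ ξ₃).map (algebraMap ℝ ℂ) *ᵥ waveVec ε ξ₁ ξ₂ ξ₃ c
      = (((-(ν * (ξ₁ ^ 2 + ξ₂ ^ 2 + ξ₃ ^ 2)) : ℝ) : ℂ) + c) • waveVec ε ξ₁ ξ₂ ξ₃ c := by
  have hε' : (ε : ℂ) ≠ 0 := by exact_mod_cast hε
  have hξ' : (ξ₁ : ℂ) ^ 2 + ξ₂ ^ 2 + ξ₃ ^ 2 ≠ 0 := by exact_mod_cast hξ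
  ext i
  fin_cases i <;> simp [Bmat, waveVec, mulVec, dotProduct, Fin.sum_univ_four] <;> field_simp
  · ring
  · ring
  · ring
  · linear_combination -hc

variable {ξ₁ ξ₂}

theorem kernelVec_ne_zero (hξh : ξ₁ ≠ 0 ∨ ξ₂ ≠ 0) : kernelVec ν ε ξ₁ ξ₂ ξ₃ ≠ 0 := by
  have hk : (1 + ν ^ 2 * ε ^ 2 * (ξ₁ ^ 2 + ξ₂ ^ 2 + ξ₃ ^ 2) ^ 2 : ℂ) ≠ 0 := by
    exact_mod_cast (by positivity : (0 : ℝ) < 1 + ν ^ 2 * ε ^ 2 * (ξ₁ ^ 2 + ξ₂ ^ 2 + ξ₃ ^ 2) ^ 2).ne'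
  intro h
  have h₀ := congrFun h 0
  have h₁ := congrFun h 1
  simp [kernelVec, hk] at h₀ h₁
  tauto

theorem horizontalVec_ne_zero (hξh : ξ₁ ≠ 0 ∨ ξ₂ ≠ 0) : horizontalVec ξ₁ ξ₂ ≠ 0 := by
  intro h
  have h₀ := congrFun h 0
  have h₁ := congrFun h 1
  simp [horizontalVec] at h₀ h₁
  tauto

theorem waveVec_ne_zero (hξh : ξ₁ ≠ 0 ∨ ξ₂ ≠ 0) (c : ℂ) : waveVec ε ξ₁ ξ₂ ξ₃ c ≠ 0 := by
  have ht : (ξ₁ ^ 2 + ξ₂ ^ 2 : ℂ) ≠ 0 := by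
    exact_mod_cast (by rcases hξh with h | h <;> positivity : (0 : ℝ) < ξ₁ ^ 2 + ξ₂ ^ 2).ne'
  exact Function.ne_iff.2 ⟨2, by simpa [waveVec, -neg_add_rev] using ht⟩

theorem map_eq_conj_diagonal (hν : ν ≠ 0) (hε : ε ≠ 0) (hξh : ξ₁ ≠ 0 ∨ ξ₂ ≠ 0) (ω : ℝ)
    (hω : ω ^ 2 * ε ^ 2 * (ξ₁ ^ 2 + ξ₂ ^ 2 + ξ₃ ^ 2) = ξ₁ ^ 2 + ξ₂ ^ 2) :
    let v : Fin 4 → Fin 4 → ℂ := ![kernelVec ν ε ξ₁ ξ₂ ξ₃, horizontalVec ξ₁ ξ₂,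
      waveVec ε ξ₁ ξ₂ ξ₃ (Complex.I * ω), waveVec ε ξ₁ ξ₂ ξ₃ (-(Complex.I * ω))]
    let a : ℝ := -(ν * (ξ₁ ^ 2 + ξ₂ ^ 2 + ξ₃ ^ 2))
    IsUnit (of v)ᵀ ∧ (Bmat ν ν ε ξ₁ ξ₂ ξ₃).map (algebraMap ℝ ℂ)
      = (of v)ᵀ * diagonal ![0, (a : ℂ), a + Complex.I * ω, a - Complex.I * ω] * (of v)ᵀ⁻¹ := by
  intro v a
  have ht : 0 < ξ₁ ^ 2 + ξ₂ ^ 2 := by rcases hξh with h | h <;> positivity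
  have hs : ξ₁ ^ 2 + ξ₂ ^ 2 + ξ₃ ^ 2 ≠ 0 := by positivity
  have hω₀ : ω ≠ 0 := by
    rintro rfl
    simp at hω
    linarith
  have hc : ∀ c : ℂ, c ^ 2 = -ω ^ 2 →
      c ^ 2 * ε ^ 2 * (ξ₁ ^ 2 + ξ₂ ^ 2 + ξ₃ ^ 2) = -(ξ₁ ^ 2 + ξ₂ ^ 2) := fun c hc => by
    have hω' : (ω : ℂ) ^ 2 * ε ^ 2 * (ξ₁ ^ 2 + ξ₂ ^ 2 + ξ₃ ^ 2) = ξ₁ ^ 2 + ξ₂ ^ 2 := by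
      exact_mod_cast hω
    linear_combination (ε ^ 2 * (ξ₁ ^ 2 + ξ₂ ^ 2 + ξ₃ ^ 2) : ℂ) * hc - hω'
  have hv : ∀ j, (Bmat ν ν ε ξ₁ ξ₂ ξ₃).map (algebraMap ℝ ℂ) *ᵥ v j
      = ![0, (a : ℂ), a + Complex.I * ω, a - Complex.I * ω] j • v j := by
    intro j
    fin_cases j
    · simpa [v] using mulVec_kernelVec ν ε ξ₁ ξ₂ ξ₃ hε hs
    · simpa [v, a] using mulVec_horizontalVec ν ν ε ξ₁ ξ₂ ξ₃
    · simpa [v, a] using mulVec_waveVec ν ε ξ₁ ξ₂ ξ₃ hε hs _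
        (hc _ (by rw [mul_pow, Complex.I_sq]; ring))
    · simpa [v, a, sub_eq_add_neg] using mulVec_waveVec ν ε ξ₁ ξ₂ ξ₃ hε hs _
        (hc _ (by rw [neg_sq, mul_pow, Complex.I_sq]; ring))
  have hv₀ : ∀ j, v j ≠ 0 := by
    intro j
    fin_cases j
    · exact kernelVec_ne_zero ν ε ξ₃ hξh
    · exact horizontalVec_ne_zero hξh
    · exact waveVec_ne_zero ε ξ₃ hξh _
    · exact waveVec_ne_zero ε ξ₃ hξh _
  have hd := Complex.injective_vec_zero_ofReal_add_sub_I_mul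
    (neg_ne_zero.2 (mul_ne_zero hν hs) : a ≠ 0) hω₀
  have hP := isUnit_transpose_of_mulVec_eq_smul hd hv₀ hv
  exact ⟨hP, eq_mul_diagonal_mul_inv_of_mulVec_eq_smul hP hv⟩

end Bmat

/-- Eigenvalues of `𝔹(ξ,ε)` in the case `ν' = ν`: the matrix is diagonalizable over `ℂ`
with eigenvalues `0`, `−ν|ξ|²`, `−ν|ξ|² ± i|ξ_h|/(ε|ξ|)`. -/
theorem statement8 (ν ε ξ₁ ξ₂ ξ₃ : ℝ) (hν : 0 < ν) (hε : 0 < ε) (hξh : ξ₁ ≠ 0 ∨ ξ₂ ≠ 0) :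
    let Bc : Matrix (Fin 4) (Fin 4) ℂ := (Bmat ν ν ε ξ₁ ξ₂ ξ₃).map (algebraMap ℝ ℂ)
    let nξ : ℝ := Real.sqrt (ξ₁ ^ 2 + ξ₂ ^ 2 + ξ₃ ^ 2)
    let nh : ℝ := Real.sqrt (ξ₁ ^ 2 + ξ₂ ^ 2)
    (∃ P Dg : Matrix (Fin 4) (Fin 4) ℂ, IsUnit P ∧ Dg.IsDiag ∧ Bc = P * Dg * P⁻¹) ∧
    ∀ μ : ℂ, (μ • (1 : Matrix (Fin 4) (Fin 4) ℂ) - Bc).det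
        = μ * (μ + ((ν * nξ ^ 2 : ℝ) : ℂ))
          * (μ - (-((ν * nξ ^ 2 : ℝ) : ℂ) + Complex.I * ((nh / (ε * nξ) : ℝ) : ℂ)))
          * (μ - (-((ν * nξ ^ 2 : ℝ) : ℂ) - Complex.I * ((nh / (ε * nξ) : ℝ) : ℂ))) := by
  intro Bc nξ nh
  have hs : 0 < ξ₁ ^ 2 + ξ₂ ^ 2 + ξ₃ ^ 2 := by rcases hξh with h | h <;> positivity
  have hnξ : nξ ^ 2 = ξ₁ ^ 2 + ξ₂ ^ 2 + ξ₃ ^ 2 := Real.sq_sqrt hs.le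
  have hnh : nh ^ 2 = ξ₁ ^ 2 + ξ₂ ^ 2 := Real.sq_sqrt (by positivity)
  have hω : (nh / (ε * nξ)) ^ 2 * ε ^ 2 * (ξ₁ ^ 2 + ξ₂ ^ 2 + ξ₃ ^ 2) = ξ₁ ^ 2 + ξ₂ ^ 2 := by
    rw [div_pow, mul_pow, hnξ, hnh]
    field_simp
  obtain ⟨hP, hB⟩ := Bmat.map_eq_conj_diagonal ν ε ξ₃ hν.ne' hε.ne' hξh _ hω
  refine ⟨⟨_, _, hP, isDiag_diagonal _, hB⟩, fun μ => ?_⟩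
  rw [show Bc = _ from hB, det_smul_one_sub_conj_diagonal hP, Fin.prod_univ_four, hnξ]
  simp
end

section
/- There exists a constant C > 0 such that for every u ∈ 𝒮(ℝ³) and every g ∈ 𝒮(ℝ): ∫_{ℝ²} ∫_ℝ |u(x_h, x₃)|² |g(x₃)| dx₃ dx_h ≤ C ‖g‖_{L²(ℝ)} ‖u‖_{L²(ℝ³)}^{3/2} ‖∂₃ u‖_{L²(ℝ³)}^{1/2}. -/
/-! On a vertical line, `f = u(x_h, ·)` satisfies Agmon's inequality `‖f‖_∞² ≤ 2 ‖f‖₂ ‖f'‖₂`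
(the fundamental theorem of calculus for `‖f‖²` on `(-∞, t]`), hence
`∫ ‖f‖² ‖g‖ ≤ ‖f‖_∞ ‖f‖₂ ‖g‖₂ ≤ √2 ‖g‖₂ ‖f‖₂^{3/2} ‖f'‖₂^{1/2}`.
Integrating over `x_h` and applying Hölder's inequality to `A^{3/4} B^{1/4}`, where `A` and `B`
are the squared vertical `L²` norms of `u` and `∂₃ u`, gives the estimate with `C = √2`. -/

open MeasureTheory SchwartzMap

/-- The vertical derivative `∂₃ u`. -/
noncomputable def vertDeriv (u : EuclideanSpace ℝ (Fin 3) → ℂ)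
    (x : EuclideanSpace ℝ (Fin 3)) : ℂ :=
  fderiv ℝ u x (EuclideanSpace.single 2 1)

open Filter

section Holder

variable {α : Type*} [MeasurableSpace α] {μ : Measure α}

theorem integral_norm_mul_norm_le_of_memLp_two {E F : Type*} [NormedAddCommGroup E]
    [NormedAddCommGroup F] {f : α → E} {g : α → F} (hf : MemLp f 2 μ) (hg : MemLp g 2 μ) :
    ∫ a, ‖f a‖ * ‖g a‖ ∂μ ≤
      (∫ a, ‖f a‖ ^ 2 ∂μ) ^ (1 / 2 : ℝ) * (∫ a, ‖g a‖ ^ 2 ∂μ) ^ (1 / 2 : ℝ) := by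
  have h := integral_mul_norm_le_Lp_mul_Lq (p := 2) (q := 2) .two_two
    (by simpa using hf.norm) (by simpa using hg.norm)
  simpa only [Real.rpow_two, norm_norm] using h

theorem MeasureTheory.Integrable.rpow_mul_rpow {A B : α → ℝ} (hA : Integrable A μ)
    (hB : Integrable B μ) (hA0 : 0 ≤ᵐ[μ] A) (hB0 : 0 ≤ᵐ[μ] B) {p q : ℝ} (hp : 0 ≤ p)
    (hq : 0 ≤ q) (hpq : p + q = 1) :
    Integrable (fun a => A a ^ p * B a ^ q) μ := by
  refine (hA.add hB).mono' ?_ ?_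
  · exact (hA.1.aemeasurable.pow_const p).aestronglyMeasurable.mul
      (hB.1.aemeasurable.pow_const q).aestronglyMeasurable
  filter_upwards [hA0, hB0] with a (ha : 0 ≤ A a) (hb : 0 ≤ B a)
  rw [Real.norm_of_nonneg (by positivity)]
  calc A a ^ p * B a ^ q ≤ p * A a + q * B a :=
        Real.geom_mean_le_arith_mean2_weighted hp hq ha hb hpq
    _ ≤ A a + B a := by nlinarith [mul_nonneg hq ha, mul_nonneg hp hb]

theorem integral_rpow_mul_rpow_le {A B : α → ℝ} (hA : Integrable A μ) (hB : Integrable B μ)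
    (hA0 : 0 ≤ᵐ[μ] A) (hB0 : 0 ≤ᵐ[μ] B) {p q : ℝ} (hp : 0 ≤ p) (hq : 0 ≤ q) (hpq : p + q = 1) :
    ∫ a, A a ^ p * B a ^ q ∂μ ≤ (∫ a, A a ∂μ) ^ p * (∫ a, B a ∂μ) ^ q := by
  have hAB : 0 ≤ᵐ[μ] fun a => A a ^ p * B a ^ q := by
    filter_upwards [hA0, hB0] with a (ha : 0 ≤ A a) (hb : 0 ≤ B a) using by positivity
  rw [integral_eq_lintegral_of_nonneg_ae hAB (hA.rpow_mul_rpow hB hA0 hB0 hp hq hpq).1,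
    integral_eq_lintegral_of_nonneg_ae hA0 hA.1, integral_eq_lintegral_of_nonneg_ae hB0 hB.1,
    ENNReal.toReal_rpow, ENNReal.toReal_rpow, ← ENNReal.toReal_mul]
  refine ENNReal.toReal_mono ?_ ?_
  · exact ENNReal.mul_ne_top (ENNReal.rpow_ne_top_of_nonneg hp hA.lintegral_lt_top.ne)
      (ENNReal.rpow_ne_top_of_nonneg hq hB.lintegral_lt_top.ne)
  calc ∫⁻ a, ENNReal.ofReal (A a ^ p * B a ^ q) ∂μ
      = ∫⁻ a, ENNReal.ofReal (A a) ^ p * ENNReal.ofReal (B a) ^ q ∂μ := by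
        refine lintegral_congr_ae ?_
        filter_upwards [hA0, hB0] with a (ha : 0 ≤ A a) (hb : 0 ≤ B a)
        rw [ENNReal.ofReal_mul (by positivity), ENNReal.ofReal_rpow_of_nonneg ha hp,
          ENNReal.ofReal_rpow_of_nonneg hb hq]
    _ ≤ _ := ENNReal.lintegral_mul_norm_pow_le hA.1.aemeasurable.ennreal_ofReal
        hB.1.aemeasurable.ennreal_ofReal hp hq hpq

end Holder

section Agmon

variable {F G : Type*} [NormedAddCommGroup F] [InnerProductSpace ℝ F] [NormedAddCommGroup G]
  {f f' : ℝ → F}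

theorem sq_norm_le_of_hasDerivAt (hf : ∀ t, HasDerivAt f (f' t) t) (hf2 : MemLp f 2)
    (hf'2 : MemLp f' 2) (t : ℝ) :
    ‖f t‖ ^ 2 ≤ 2 * ((∫ s, ‖f s‖ ^ 2) ^ (1 / 2 : ℝ) * (∫ s, ‖f' s‖ ^ 2) ^ (1 / 2 : ℝ)) := by
  have hprod : Integrable fun s => 2 * (‖f s‖ * ‖f' s‖) :=
    (hf2.norm.integrable_mul hf'2.norm).const_mul 2
  have hderiv_int : Integrable fun s => 2 * inner ℝ (f s) (f' s) := by
    refine hprod.mono' ((hf2.1.inner hf'2.1).const_mul 2) (Eventually.of_forall fun s => ?_)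
    rw [norm_mul, Real.norm_two, Real.norm_eq_abs]
    exact mul_le_mul_of_nonneg_left (abs_real_inner_le_norm _ _) zero_le_two
  have hsq := fun s => (hf s).norm_sq
  have hlim : Tendsto (fun s => ‖f s‖ ^ 2) atBot (nhds 0) :=
    tendsto_zero_of_hasDerivAt_of_integrableOn_Iic (a := t) (fun s _ => hsq s)
      hderiv_int.integrableOn ((memLp_two_iff_integrable_sq_norm hf2.1).1 hf2).integrableOn
  calc ‖f t‖ ^ 2 = ∫ s in Set.Iic t, 2 * inner ℝ (f s) (f' s) := by
        rw [integral_Iic_of_hasDerivAt_of_tendsto' (fun s _ => hsq s) hderiv_int.integrableOn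
          hlim, sub_zero]
    _ ≤ ∫ s in Set.Iic t, 2 * (‖f s‖ * ‖f' s‖) := by
        refine setIntegral_mono hderiv_int.integrableOn hprod.integrableOn fun s => ?_
        exact mul_le_mul_of_nonneg_left (real_inner_le_norm _ _) zero_le_two
    _ ≤ ∫ s, 2 * (‖f s‖ * ‖f' s‖) :=
        setIntegral_le_integral hprod (Eventually.of_forall fun s => by positivity)
    _ ≤ _ := by
        rw [integral_const_mul]
        exact mul_le_mul_of_nonneg_left (integral_norm_mul_norm_le_of_memLp_two hf2 hf'2)
          zero_le_two

theorem integral_sq_norm_mul_norm_le (hf : ∀ t, HasDerivAt f (f' t) t) (hf2 : MemLp f 2)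
    (hf'2 : MemLp f' 2) {g : ℝ → G} (hg : MemLp g 2) :
    ∫ t, ‖f t‖ ^ 2 * ‖g t‖ ≤ √2 * (∫ t, ‖g t‖ ^ 2) ^ (1 / 2 : ℝ)
      * ((∫ t, ‖f t‖ ^ 2) ^ (3 / 4 : ℝ) * (∫ t, ‖f' t‖ ^ 2) ^ (1 / 4 : ℝ)) := by
  set I := ∫ t, ‖f t‖ ^ 2
  set I' := ∫ t, ‖f' t‖ ^ 2
  set M := √(2 * (I ^ (1 / 2 : ℝ) * I' ^ (1 / 2 : ℝ))) with hMdef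
  have hI : 0 ≤ I := integral_nonneg fun t => by positivity
  have hI' : 0 ≤ I' := integral_nonneg fun t => by positivity
  have hsup : ∀ t, ‖f t‖ ≤ M := fun t =>
    Real.le_sqrt_of_sq_le (sq_norm_le_of_hasDerivAt hf hf2 hf'2 t)
  have hM : M = √2 * (I ^ (1 / 4 : ℝ) * I' ^ (1 / 4 : ℝ)) := by
    rw [hMdef, Real.sqrt_mul zero_le_two, Real.sqrt_eq_rpow (_ * _),
      Real.mul_rpow (by positivity) (by positivity), ← Real.rpow_mul hI, ← Real.rpow_mul hI']
    norm_num
  calc ∫ t, ‖f t‖ ^ 2 * ‖g t‖ ≤ ∫ t, M * (‖f t‖ * ‖g t‖) := by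
        refine integral_mono_of_nonneg (Eventually.of_forall fun t => by positivity)
          ((hf2.norm.integrable_mul hg.norm).const_mul M) (Eventually.of_forall fun t => ?_)
        calc ‖f t‖ ^ 2 * ‖g t‖ = ‖f t‖ * (‖f t‖ * ‖g t‖) := by ring
          _ ≤ M * (‖f t‖ * ‖g t‖) := by gcongr; exact hsup t
    _ = M * ∫ t, ‖f t‖ * ‖g t‖ := integral_const_mul _ _
    _ ≤ M * (I ^ (1 / 2 : ℝ) * (∫ t, ‖g t‖ ^ 2) ^ (1 / 2 : ℝ)) :=
        mul_le_mul_of_nonneg_left (integral_norm_mul_norm_le_of_memLp_two hf2 hg)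
          (Real.sqrt_nonneg _)
    _ = _ := by
        rw [hM, show (3 / 4 : ℝ) = 1 / 4 + 1 / 2 by norm_num, Real.rpow_add' hI (by norm_num)]
        ring

end Agmon

noncomputable def prodEquivEuclideanThree : ((ℝ × ℝ) × ℝ) ≃ᵐ EuclideanSpace ℝ (Fin 3) :=
  (MeasurableEquiv.finTwoArrow.symm.prodCongr (.refl ℝ)).trans <|
    MeasurableEquiv.prodComm.trans <|
      (MeasurableEquiv.piFinSuccAbove (fun _ : Fin 3 => ℝ) 2).symm.trans <|
        MeasurableEquiv.toLp 2 (Fin 3 → ℝ)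

@[simp]
theorem prodEquivEuclideanThree_apply (p : (ℝ × ℝ) × ℝ) :
    prodEquivEuclideanThree p = WithLp.toLp 2 ![p.1.1, p.1.2, p.2] := by
  ext i
  fin_cases i <;> rfl

theorem measurePreserving_prodEquivEuclideanThree :
    MeasurePreserving prodEquivEuclideanThree := by
  have h₁ : MeasurePreserving (MeasurableEquiv.finTwoArrow.symm.prodCongr (.refl ℝ))
      (volume : Measure ((ℝ × ℝ) × ℝ)) volume :=
    ((volume_preserving_finTwoArrow ℝ).symm _).prod (.id _)
  have h₂ : MeasurePreserving (MeasurableEquiv.prodComm : ((Fin 2 → ℝ) × ℝ) ≃ᵐ _) :=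
    Measure.measurePreserving_swap
  exact (((EuclideanSpace.volume_preserving_symm_measurableEquiv_toLp (Fin 3)).symm _).comp
    ((volume_preserving_piFinSuccAbove (fun _ : Fin 3 => ℝ) 2).symm _)).comp (h₂.comp h₁)

section Fubini

variable {E : Type*} [NormedAddCommGroup E] {F : EuclideanSpace ℝ (Fin 3) → E}

theorem MeasureTheory.Integrable.comp_prodEquivEuclideanThree (hF : Integrable F) :
    Integrable (fun p : (ℝ × ℝ) × ℝ => F (WithLp.toLp 2 ![p.1.1, p.1.2, p.2]))
      ((volume : Measure (ℝ × ℝ)).prod volume) := by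
  simpa [Function.comp_def, Measure.volume_eq_prod] using
    (measurePreserving_prodEquivEuclideanThree.integrable_comp_emb
      prodEquivEuclideanThree.measurableEmbedding).2 hF

theorem MeasureTheory.Integrable.integrable_integral_vertical [NormedSpace ℝ E]
    (hF : Integrable F) :
    Integrable fun xh : ℝ × ℝ => ∫ t, F (WithLp.toLp 2 ![xh.1, xh.2, t]) :=
  hF.comp_prodEquivEuclideanThree.integral_prod_left

theorem integral_eq_integral_integral_vertical [NormedSpace ℝ E] (hF : Integrable F) :
    ∫ x, F x = ∫ xh : ℝ × ℝ, ∫ t, F (WithLp.toLp 2 ![xh.1, xh.2, t]) := by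
  rw [← measurePreserving_prodEquivEuclideanThree.integral_comp' F, Measure.volume_eq_prod]
  simpa using integral_prod _ hF.comp_prodEquivEuclideanThree

theorem MeasureTheory.MemLp.ae_memLp_two_vertical (hF : MemLp F 2) :
    ∀ᵐ xh : ℝ × ℝ, MemLp (fun t => F (WithLp.toLp 2 ![xh.1, xh.2, t])) 2 := by
  have h := hF.comp_measurePreserving measurePreserving_prodEquivEuclideanThree
  rw [Measure.volume_eq_prod] at h
  filter_upwards [h.1.prodMk_left, ((memLp_two_iff_integrable_sq_norm h.1).1 h).prod_right_ae]
    with xh hmeas hint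
  simpa using (memLp_two_iff_integrable_sq_norm hmeas).2 hint

end Fubini

theorem Differentiable.hasDerivAt_vertDeriv {u : EuclideanSpace ℝ (Fin 3) → ℂ}
    (hu : Differentiable ℝ u) (a b t : ℝ) :
    HasDerivAt (fun s => u (WithLp.toLp 2 ![a, b, s]))
      (vertDeriv u (WithLp.toLp 2 ![a, b, t])) t := by
  have hline : HasDerivAt (fun s : ℝ => (WithLp.toLp 2 ![a, b, s] : EuclideanSpace ℝ (Fin 3)))
      (EuclideanSpace.single 2 1) t := by
    have h : (fun s : ℝ => (WithLp.toLp 2 ![a, b, s] : EuclideanSpace ℝ (Fin 3))) =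
        fun s => WithLp.toLp 2 ![a, b, 0] + s • EuclideanSpace.single 2 1 := by
      funext s; ext i; fin_cases i <;> simp
    rw [h]
    simpa using
      ((hasDerivAt_id t).smul_const (EuclideanSpace.single (2 : Fin 3) (1 : ℝ))).const_add
        (WithLp.toLp 2 ![a, b, 0] : EuclideanSpace ℝ (Fin 3))
  exact (hu _).hasFDerivAt.comp_hasDerivAt t hline

theorem SchwartzMap.memLp_two_vertDeriv (u : 𝓢(EuclideanSpace ℝ (Fin 3), ℂ)) :
    MemLp (vertDeriv u) 2 :=
  (LineDeriv.lineDerivOp (EuclideanSpace.single (2 : Fin 3) (1 : ℝ)) u).memLp 2 volume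

theorem integral_integral_sq_norm_mul_norm_le {u : EuclideanSpace ℝ (Fin 3) → ℂ}
    (hu : Differentiable ℝ u) (hu2 : MemLp u 2) (hdu2 : MemLp (vertDeriv u) 2) {G : Type*}
    [NormedAddCommGroup G] {g : ℝ → G} (hg : MemLp g 2) :
    ∫ xh : ℝ × ℝ, ∫ t, ‖u (WithLp.toLp 2 ![xh.1, xh.2, t])‖ ^ 2 * ‖g t‖ ≤
      √2 * (∫ t, ‖g t‖ ^ 2) ^ (1 / 2 : ℝ) *
        ((∫ x, ‖u x‖ ^ 2) ^ (3 / 4 : ℝ) * (∫ x, ‖vertDeriv u x‖ ^ 2) ^ (1 / 4 : ℝ)) := by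
  set A := fun xh : ℝ × ℝ => ∫ t, ‖u (WithLp.toLp 2 ![xh.1, xh.2, t])‖ ^ 2
  set B := fun xh : ℝ × ℝ => ∫ t, ‖vertDeriv u (WithLp.toLp 2 ![xh.1, xh.2, t])‖ ^ 2
  have hu_sq := (memLp_two_iff_integrable_sq_norm hu2.1).1 hu2
  have hdu_sq := (memLp_two_iff_integrable_sq_norm hdu2.1).1 hdu2
  have hA0 : 0 ≤ᵐ[volume] A := .of_forall fun xh => integral_nonneg fun t => by positivity
  have hB0 : 0 ≤ᵐ[volume] B := .of_forall fun xh => integral_nonneg fun t => by positivity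
  have hslice : ∀ᵐ xh : ℝ × ℝ, ∫ t, ‖u (WithLp.toLp 2 ![xh.1, xh.2, t])‖ ^ 2 * ‖g t‖ ≤
      √2 * (∫ t, ‖g t‖ ^ 2) ^ (1 / 2 : ℝ) * (A xh ^ (3 / 4 : ℝ) * B xh ^ (1 / 4 : ℝ)) := by
    filter_upwards [hu2.ae_memLp_two_vertical, hdu2.ae_memLp_two_vertical] with xh h h'
    exact integral_sq_norm_mul_norm_le (hu.hasDerivAt_vertDeriv _ _) h h' hg
  rw [integral_eq_integral_integral_vertical hu_sq, integral_eq_integral_integral_vertical hdu_sq]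
  calc _ ≤ ∫ xh, √2 * (∫ t, ‖g t‖ ^ 2) ^ (1 / 2 : ℝ) *
          (A xh ^ (3 / 4 : ℝ) * B xh ^ (1 / 4 : ℝ)) :=
        integral_mono_of_nonneg (.of_forall fun xh => integral_nonneg fun t => by positivity)
          ((hu_sq.integrable_integral_vertical.rpow_mul_rpow
            hdu_sq.integrable_integral_vertical hA0 hB0 (by norm_num) (by norm_num)
            (by norm_num)).const_mul _) hslice
    _ ≤ _ := by
        rw [integral_const_mul]
        gcongr
        exact integral_rpow_mul_rpow_le hu_sq.integrable_integral_vertical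
          hdu_sq.integrable_integral_vertical hA0 hB0 (by norm_num) (by norm_num) (by norm_num)

/-- Weighted interaction estimate:
`∫∫ |u|² |g(x₃)| ≤ C ‖g‖_{L²(ℝ)} ‖u‖_{L²(ℝ³)}^{3/2} ‖∂₃u‖_{L²(ℝ³)}^{1/2}`. -/
theorem statement18 :
    ∃ C > (0 : ℝ), ∀ (u : 𝓢(EuclideanSpace ℝ (Fin 3), ℂ)) (g : 𝓢(ℝ, ℂ)),
      (∫ xh : ℝ × ℝ, ∫ x₃ : ℝ,
          ‖u (WithLp.toLp 2 ![xh.1, xh.2, x₃] : EuclideanSpace ℝ (Fin 3))‖ ^ 2 * ‖g x₃‖)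
        ≤ C * (∫ x₃ : ℝ, ‖g x₃‖ ^ 2) ^ (1 / 2 : ℝ)
            * ((∫ x : EuclideanSpace ℝ (Fin 3), ‖u x‖ ^ 2) ^ (1 / 2 : ℝ)) ^ (3 / 2 : ℝ)
            * ((∫ x : EuclideanSpace ℝ (Fin 3), ‖vertDeriv (fun y => u y) x‖ ^ 2)
                ^ (1 / 2 : ℝ)) ^ (1 / 2 : ℝ) := by
  refine ⟨√2, by positivity, fun u g => ?_⟩
  have h := integral_integral_sq_norm_mul_norm_le u.differentiable (u.memLp 2)
    u.memLp_two_vertDeriv (g.memLp 2)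
  rw [← Real.rpow_mul (integral_nonneg fun x => by positivity),
    ← Real.rpow_mul (integral_nonneg fun x => by positivity)]
  norm_num [mul_assoc] at h ⊢
  exact h
end
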